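/- For homotopic cochain maps f, g : C → C of R-module cochain complexes, the algebraic mapping 1-tori T(f) and T(g) are isomorphic as R[z,z^{-1}]-module cochain complexes. -/

import Mathlib

open scoped TensorProduct

noncomputable section

variable (R : Type) [CommRing R]

/-- The Laurent polynomial ring `R[z,z⁻¹]`. -/
abbrev L := LaurentPolynomial R

/-- The indeterminate `z ∈ R[z,z⁻¹]`. -/
noncomputable def zvar : L R := LaurentPolynomial.T 1

variable (C : ℤ → Type) [∀ n, AddCommGroup (C n)] [∀ n, Module R (C n)]

/-- The mapping 1-torus `T(h)` of a degree-zero self map `h` of a cochain complex `C` of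
`R`-modules: the mapping cone of `h ⊗ id − id ⊗ z` on `C ⊗_R R[z,z⁻¹]`, realised with the
Laurent polynomial factor written on the left.  This is its `n`-th term. -/
def torusX (n : ℤ) : Type := (L R ⊗[R] C (n + 1)) × (L R ⊗[R] C n)

instance (n : ℤ) : AddCommGroup (torusX R C n) := by unfold torusX; infer_instance
instance (n : ℤ) : Module (L R) (torusX R C n) := by unfold torusX; infer_instance

/-- The differential of the mapping 1-torus `T(h)`:
`(x, y) ↦ (−(d⊗id) x, (h⊗id − id⊗z) x + (d⊗id) y)`. -/
def torusD (dC : ∀ n, C n →ₗ[R] C (n + 1)) (h : ∀ n, C n →ₗ[R] C n) (n : ℤ) :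
    torusX R C n →ₗ[L R] torusX R C (n + 1) :=
  LinearMap.prod
    (-((LinearMap.baseChange (L R) (dC (n + 1))).comp
        (LinearMap.fst (L R) (L R ⊗[R] C (n + 1)) (L R ⊗[R] C n))))
    (((LinearMap.baseChange (L R) (h (n + 1))
        - LinearMap.lsmul (L R) (L R ⊗[R] C (n + 1)) (zvar R)).comp
        (LinearMap.fst (L R) (L R ⊗[R] C (n + 1)) (L R ⊗[R] C n)))
      + ((LinearMap.baseChange (L R) (dC n)).comp
        (LinearMap.snd (L R) (L R ⊗[R] C (n + 1)) (L R ⊗[R] C n))))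

/-! The shear `(x, y) ↦ (x, y + (s ⊗ id) x)` by the homotopy `s` is an isomorphism `T(f) ≅ T(g)`:
comparing second components of the two sides leaves `(f − g) x − d s x − s d x`, which the
homotopy identity kills. -/

namespace MappingOneTorus

variable {R C}

@[simp]
theorem torusD_fst (dC : ∀ n, C n →ₗ[R] C (n + 1)) (h : ∀ n, C n →ₗ[R] C n) (n : ℤ)
    (x : torusX R C n) :
    (torusD R C dC h n x).1 = -(dC (n + 1)).baseChange (L R) x.1 :=
  rfl

@[simp]
theorem torusD_snd (dC : ∀ n, C n →ₗ[R] C (n + 1)) (h : ∀ n, C n →ₗ[R] C n) (n : ℤ)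
    (x : torusX R C n) :
    (torusD R C dC h n x).2 =
      (h (n + 1)).baseChange (L R) x.1 - zvar R • x.1 + (dC n).baseChange (L R) x.2 :=
  rfl

def shear (s : ∀ n, C (n + 1) →ₗ[R] C n) (n : ℤ) : torusX R C n ≃ₗ[L R] torusX R C n :=
  LinearEquiv.skewProd (LinearEquiv.refl _ _) (LinearEquiv.refl _ _) ((s n).baseChange (L R))

@[simp]
theorem shear_fst (s : ∀ n, C (n + 1) →ₗ[R] C n) (n : ℤ) (x : torusX R C n) :
    (shear s n x).1 = x.1 :=
  rfl

@[simp]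
theorem shear_snd (s : ∀ n, C (n + 1) →ₗ[R] C n) (n : ℤ) (x : torusX R C n) :
    (shear s n x).2 = x.2 + (s n).baseChange (L R) x.1 :=
  rfl

theorem baseChange_sub_eq_of_homotopy {M N P Q : Type*} [AddCommGroup M] [Module R M]
    [AddCommGroup N] [Module R N] [AddCommGroup P] [Module R P] [AddCommGroup Q] [Module R Q]
    (A : Type*) [Ring A] [Algebra R A]
    {f g : M →ₗ[R] N} {d : P →ₗ[R] N} {s : M →ₗ[R] P} {d' : M →ₗ[R] Q} {s' : Q →ₗ[R] N}
    (h : f - g = d ∘ₗ s + s' ∘ₗ d') :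
    f.baseChange A - g.baseChange A =
      d.baseChange A ∘ₗ s.baseChange A + s'.baseChange A ∘ₗ d'.baseChange A := by
  rw [← LinearMap.baseChange_sub, h, LinearMap.baseChange_add, LinearMap.baseChange_comp,
    LinearMap.baseChange_comp]

theorem shear_torusD (dC : ∀ n, C n →ₗ[R] C (n + 1)) (f g : ∀ n, C n →ₗ[R] C n)
    (s : ∀ n, C (n + 1) →ₗ[R] C n) (n : ℤ)
    (hs : f (n + 1) - g (n + 1) = dC n ∘ₗ s n + s (n + 1) ∘ₗ dC (n + 1)) (x : torusX R C n) :
    shear s (n + 1) (torusD R C dC f n x) = torusD R C dC g n (shear s n x) := by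
  have hx := LinearMap.congr_fun (baseChange_sub_eq_of_homotopy (L R) hs) x.1
  rw [LinearMap.sub_apply, sub_eq_iff_eq_add'] at hx
  refine Prod.ext rfl ?_
  simp only [torusD_snd, shear_fst, shear_snd, torusD_fst, hx, LinearMap.add_apply,
    LinearMap.comp_apply, map_neg, map_add]
  abel

end MappingOneTorus

open MappingOneTorus in
theorem mappingOneTorus_iso_of_homotopic
    (dC : ∀ n, C n →ₗ[R] C (n + 1))
    (f g : ∀ n, C n →ₗ[R] C n)
    -- a homotopy from `f` to `g`:
    (s : ∀ n, C (n + 1) →ₗ[R] C n)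
    (hs : ∀ n (x : C (n + 1)),
      f (n + 1) x - g (n + 1) x = dC n (s n x) + s (n + 1) (dC (n + 1) x)) :
    ∃ e : ∀ n, torusX R C n ≃ₗ[L R] torusX R C n,
      ∀ n (x : torusX R C n),
        e (n + 1) (torusD R C dC f n x) = torusD R C dC g n (e n x) :=
  ⟨shear s, fun n => shear_torusD dC f g s n (LinearMap.ext (hs n))⟩

end
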